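/- Fix a sequence of classes F_{1:Λ} and a point (x,y) ∈ X × [0,1]. If for some λ ∈ [Λ], |SOA_{α_λ}(F_λ)(x) − y| > 5α_λ, then Terr(F_{1:Λ},x,y) > α_λ. -/

import Mathlib

/-!
Before the cutoff `λ̄` consecutive aggregates differ by at most `2·2^{-n}`, so by telescoping
`|g λ - g λ̄| ≤ 4·2^{-λ}` whenever `λ ≤ λ̄`; then `|g λ - y| > 5·2^{-λ}` forces
`|g λ̄ - y| > 2^{-λ}`. If instead `λ̄ < λ`, the term `2^{-λ̄}` alone exceeds `2^{-λ}`.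
-/

open Classical in
/-- The cutoff point of the hierarchical aggregation rule: the smallest `l` with
`1 ≤ l < Λ` and `|g l - g (l+1)| > 2·2^{-l}`, or `Λ` if no such `l` exists. -/
noncomputable def cutoff (Λ : ℕ) (g : ℕ → ℝ) : ℕ :=
  if h : ∃ l, (1 ≤ l ∧ l < Λ) ∧ 2 * ((2:ℝ) ^ l)⁻¹ < |g l - g (l + 1)| then Nat.find h else Λ

lemma abs_sub_le_of_abs_sub_succ_le {g : ℕ → ℝ} {l m : ℕ} (hlm : l ≤ m)
    (hstep : ∀ n, l ≤ n → n < m → |g n - g (n + 1)| ≤ 2 * ((2:ℝ) ^ n)⁻¹) :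
    |g l - g m| ≤ 4 * (((2:ℝ) ^ l)⁻¹ - ((2:ℝ) ^ m)⁻¹) := by
  induction m, hlm using Nat.le_induction with
  | base => simp
  | succ n hln ih =>
    have hprev := ih fun k hlk hkn => hstep k hlk (hkn.trans n.lt_succ_self)
    have hlast := hstep n hln n.lt_succ_self
    have hhalf : ((2:ℝ) ^ (n + 1))⁻¹ = ((2:ℝ) ^ n)⁻¹ / 2 := by
      rw [pow_succ, mul_inv, div_eq_mul_inv]
    calc |g l - g (n + 1)| ≤ |g l - g n| + |g n - g (n + 1)| := abs_sub_le _ _ _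
      _ ≤ 4 * (((2:ℝ) ^ l)⁻¹ - ((2:ℝ) ^ (n + 1))⁻¹) := by rw [hhalf]; linarith

section cutoff

variable {Λ : ℕ} {g : ℕ → ℝ}

lemma cutoff_le : cutoff Λ g ≤ Λ := by
  unfold cutoff
  split_ifs with h
  · exact (Nat.find_spec h).1.2.le
  · exact le_rfl

lemma abs_sub_succ_le_of_lt_cutoff {n : ℕ} (hn : 1 ≤ n) (hnc : n < cutoff Λ g) :
    |g n - g (n + 1)| ≤ 2 * ((2:ℝ) ^ n)⁻¹ := by
  by_contra! hbig
  have hex : ∃ k, (1 ≤ k ∧ k < Λ) ∧ 2 * ((2:ℝ) ^ k)⁻¹ < |g k - g (k + 1)| :=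
    ⟨n, ⟨hn, hnc.trans_le cutoff_le⟩, hbig⟩
  have hcn : cutoff Λ g ≤ n := by
    rw [cutoff, dif_pos hex]
    exact Nat.find_min' hex ⟨⟨hn, hnc.trans_le cutoff_le⟩, hbig⟩
  omega

lemma abs_sub_cutoff_le {l : ℕ} (hl : 1 ≤ l) (hlc : l ≤ cutoff Λ g) :
    |g l - g (cutoff Λ g)| ≤ 4 * ((2:ℝ) ^ l)⁻¹ :=
  calc |g l - g (cutoff Λ g)| ≤ 4 * (((2:ℝ) ^ l)⁻¹ - ((2:ℝ) ^ cutoff Λ g)⁻¹) :=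
        abs_sub_le_of_abs_sub_succ_le hlc fun _ hln hnc =>
          abs_sub_succ_le_of_lt_cutoff (hl.trans hln) hnc
    _ ≤ 4 * ((2:ℝ) ^ l)⁻¹ := by gcongr; exact sub_le_self _ (by positivity)

end cutoff

theorem stmt13_general (Λ : ℕ) (g : ℕ → ℝ)
    (y : ℝ)
    (l : ℕ) (hl1 : 1 ≤ l)
    (hfar : 5 * ((2:ℝ) ^ l)⁻¹ < |g l - y|) :
    ((2:ℝ) ^ l)⁻¹ < max |g (cutoff Λ g) - y| ((2:ℝ) ^ cutoff Λ g)⁻¹ := by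
  rcases lt_or_ge (cutoff Λ g) l with hcl | hlc
  · exact lt_max_of_lt_right <| inv_strictAnti₀ (by positivity) <|
      pow_lt_pow_right₀ one_lt_two hcl
  · have hclose := abs_sub_cutoff_le hl1 hlc
    have htri : |g l - y| ≤ |g l - g (cutoff Λ g)| + |g (cutoff Λ g) - y| := abs_sub_le _ _ _
    exact lt_max_of_lt_left (by linarith)

/-- abstract form of Lemma terr-lb: for `g_1,…,g_Λ ∈ [0,1]` with cutoff
point `λ̄` and `y ∈ [0,1]`, if `|g_λ − y| > 5·2^{-λ}` for some `λ ∈ [Λ]`, then the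
truncated error `max(|g_{λ̄} − y|, 2^{-λ̄})` exceeds `2^{-λ}`. -/
theorem stmt13 (Λ : ℕ) (hΛ : 1 ≤ Λ) (g : ℕ → ℝ)
    (hg : ∀ l, 1 ≤ l → l ≤ Λ → g l ∈ Set.Icc (0:ℝ) 1)
    (y : ℝ) (hy : y ∈ Set.Icc (0:ℝ) 1)
    (l : ℕ) (hl1 : 1 ≤ l) (hlΛ : l ≤ Λ)
    (hfar : 5 * ((2:ℝ) ^ l)⁻¹ < |g l - y|) :
    ((2:ℝ) ^ l)⁻¹ < max |g (cutoff Λ g) - y| ((2:ℝ) ^ cutoff Λ g)⁻¹ :=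
  stmt13_general Λ g y l hl1 hfar
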